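/- arXiv:2008.12211 — 5 statements merged into one kernel-verified Lean document; each statement's English description precedes it below -/
import Mathlib

section
/- Let T : c₀(Γ) → E be a bounded operator into a Banach space E such that there exists an injective bounded operator U from the closure of the image of T into ℓ_∞. Then there is a countable subset Δ of Γ such that T = T ∘ P_Δ; equivalently, T e_γ = 0 for all γ outside a countable set. -/
open scoped ZeroAtInfty ENNReal

/-- The unit vector `e_γ` of `c₀(Γ)` (for `Γ` discrete), realised in `C₀(Γ, ℝ)`. -/
noncomputable def c0Single (Γ : Type*) [TopologicalSpace Γ] [DiscreteTopology Γ]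
    (γ : Γ) : C₀(Γ, ℝ) where
  toFun := Set.indicator ({γ} : Set Γ) (fun _ => (1 : ℝ))
  continuous_toFun := continuous_of_discreteTopology
  zero_at_infty' := by
    have h : Set.indicator ({γ} : Set Γ) (fun _ => (1 : ℝ)) =ᶠ[Filter.cocompact Γ]
        (fun _ => (0 : ℝ)) := by
      filter_upwards [Filter.mem_cocompact.mpr
        ⟨{γ}, isCompact_singleton, subset_rfl⟩] with β hβ
      exact Set.indicator_of_notMem hβ _
    exact Filter.Tendsto.congr' h.symm tendsto_const_nhds

/-! A bounded functional `f` on `c₀(Γ)` satisfies `∑_{γ ∈ S} |f e_γ| ≤ ‖f‖` for every finite `S`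
(test `f` on `∑_{γ ∈ S} sign (f e_γ) e_γ`, a vector of norm at most `1`), so `γ ↦ f e_γ` is summable
and has countable support. The coordinates of `U ∘ T` are countably many such functionals, and
since `U` is injective, `T e_γ ≠ 0` forces some coordinate of `U (T e_γ)` to be nonzero. -/

section C0Single

variable {Γ : Type*} [TopologicalSpace Γ] [DiscreteTopology Γ]

lemma c0Single_apply [DecidableEq Γ] (γ β : Γ) :
    c0Single Γ γ β = if β = γ then 1 else 0 := by
  simp [c0Single, Pi.single_apply]

lemma sum_smul_c0Single_apply (S : Finset Γ) (c : Γ → ℝ) (β : Γ) :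
    (∑ γ ∈ S, c γ • c0Single Γ γ) β = Set.indicator S c β := by
  classical
  calc (∑ γ ∈ S, c γ • c0Single Γ γ) β = ∑ γ ∈ S, c γ * c0Single Γ γ β :=
        map_sum (AddMonoidHom.mk' (fun f : C₀(Γ, ℝ) => f β) fun _ _ => rfl) _ S
    _ = Set.indicator S c β := by simp [c0Single_apply, Set.indicator_apply]

lemma norm_sum_smul_c0Single_le (S : Finset Γ) {c : Γ → ℝ} (hc : ∀ γ, |c γ| ≤ 1) :
    ‖∑ γ ∈ S, c γ • c0Single Γ γ‖ ≤ 1 := by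
  rw [← ZeroAtInftyContinuousMap.norm_toBCF_eq_norm,
    BoundedContinuousFunction.norm_le zero_le_one]
  intro β
  change ‖(∑ γ ∈ S, c γ • c0Single Γ γ) β‖ ≤ 1
  rw [sum_smul_c0Single_apply]
  by_cases hβ : β ∈ S <;> simp [hβ, hc]

lemma sum_abs_apply_c0Single_le_opNorm (f : C₀(Γ, ℝ) →L[ℝ] ℝ) (S : Finset Γ) :
    ∑ γ ∈ S, |f (c0Single Γ γ)| ≤ ‖f‖ := by
  set c : Γ → ℝ := fun γ => SignType.sign (f (c0Single Γ γ))
  have hc : ∀ γ, |c γ| ≤ 1 := fun γ => by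
    change |((SignType.sign (f (c0Single Γ γ)) : SignType) : ℝ)| ≤ 1
    cases SignType.sign (f (c0Single Γ γ)) <;> simp
  calc ∑ γ ∈ S, |f (c0Single Γ γ)|
      = f (∑ γ ∈ S, c γ • c0Single Γ γ) := by simp [c, map_sum]
    _ ≤ ‖f‖ * ‖∑ γ ∈ S, c γ • c0Single Γ γ‖ := (le_abs_self _).trans (f.le_opNorm _)
    _ ≤ ‖f‖ := mul_le_of_le_one_right (norm_nonneg f) (norm_sum_smul_c0Single_le S hc)

lemma countable_setOf_apply_c0Single_ne_zero (f : C₀(Γ, ℝ) →L[ℝ] ℝ) :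
    {γ | f (c0Single Γ γ) ≠ 0}.Countable := by
  have hsum : Summable fun γ => |f (c0Single Γ γ)| :=
    summable_of_sum_le (fun _ => abs_nonneg _) (sum_abs_apply_c0Single_le_opNorm f)
  simpa [Function.support] using hsum.countable_support

lemma countable_setOf_apply_c0Single_ne_zero_of_lp {ι : Type*} [Countable ι]
    (V : C₀(Γ, ℝ) →L[ℝ] lp (fun _ : ι => ℝ) ∞) :
    {γ | V (c0Single Γ γ) ≠ 0}.Countable := by
  have hcover : {γ | V (c0Single Γ γ) ≠ 0} ⊆
      ⋃ i, {γ | (lp.evalCLM ℝ _ ∞ i ∘L V) (c0Single Γ γ) ≠ 0} := by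
    intro γ hγ
    by_contra h
    simp only [Set.mem_iUnion, Set.mem_ofPred_eq, not_exists, not_not] at h
    exact hγ (lp.ext (funext h))
  exact (Set.countable_iUnion fun i => countable_setOf_apply_c0Single_ne_zero _).mono hcover

end C0Single

theorem c0_operator_countably_supported_general
    (Γ : Type*) [TopologicalSpace Γ] [DiscreteTopology Γ]
    (E : Type*) [NormedAddCommGroup E] [NormedSpace ℝ E]
    (T : C₀(Γ, ℝ) →L[ℝ] E)
    (U : ↥((LinearMap.range (T : C₀(Γ, ℝ) →ₗ[ℝ] E)).topologicalClosure) →L[ℝ]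
      lp (fun _ : ℕ => ℝ) ∞)
    (hU : Function.Injective U) :
    ∃ Δ : Set Γ, Δ.Countable ∧ ∀ γ ∉ Δ, T (c0Single Γ γ) = 0 := by
  set T' := T.codRestrict _ fun x =>
    Submodule.le_topologicalClosure _ (LinearMap.mem_range_self _ x)
  refine ⟨_, countable_setOf_apply_c0Single_ne_zero_of_lp (U ∘L T'), fun γ hγ => ?_⟩
  have hUT : U (T' (c0Single Γ γ)) = U 0 := by simpa using hγ
  simpa [T'] using congrArg Subtype.val (hU hUT)

/-- Let `T : c₀(Γ) → E` be a bounded operator into a Banach space `E` such that there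
is an injective bounded operator `U` from the closure of the image of `T` into `ℓ_∞`.
Then `T e_γ = 0` for all `γ` outside a countable subset `Δ` of `Γ`
(equivalently, `T = T ∘ P_Δ`). -/
theorem c0_operator_countably_supported
    (Γ : Type*) [Nonempty Γ] [TopologicalSpace Γ] [DiscreteTopology Γ]
    (E : Type*) [NormedAddCommGroup E] [NormedSpace ℝ E] [CompleteSpace E]
    (T : C₀(Γ, ℝ) →L[ℝ] E)
    (U : ↥((LinearMap.range (T : C₀(Γ, ℝ) →ₗ[ℝ] E)).topologicalClosure) →L[ℝ]
      lp (fun _ : ℕ => ℝ) ∞)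
    (hU : Function.Injective U) :
    ∃ Δ : Set Γ, Δ.Countable ∧ ∀ γ ∉ Δ, T (c0Single Γ γ) = 0 :=
  c0_operator_countably_supported_general Γ E T U hU
end

section
/- Let 1 < p < ∞ and let T : ℓ_p(Γ) → E be a bounded operator into a Banach space E such that there exists an injective bounded operator from the closure of the image of T into ℓ_∞. Then T e_γ = 0 for all γ ∈ Γ outside some countable subset Δ, and hence T = T ∘ P_Δ. -/
open scoped ENNReal

/-- A continuous linear functional on `ℓ_p(Γ)` with `1 < p < ∞` vanishes on all but
countably many unit vectors. -/
lemma lp_functional_countable_support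
    {Γ : Type*} [DecidableEq Γ] (p : ℝ≥0∞) [Fact (1 ≤ p)] (hp₁ : 1 < p) (hp₂ : p < ∞)
    (φ : lp (fun _ : Γ => ℝ) p →L[ℝ] ℝ) :
    {γ : Γ | φ (lp.single p γ (1 : ℝ)) ≠ 0}.Countable := by
  set f : Γ → ℝ := fun γ => φ (lp.single p γ (1 : ℝ)) with hf
  set t : ℝ := p.toReal with ht
  have ht1 : 1 < t := by
    rw [ht, ← ENNReal.toReal_one]
    exact ENNReal.toReal_strict_mono hp₂.ne hp₁
  have ht0 : 0 < t := lt_trans one_pos ht1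
  -- key finiteness: for every ε > 0 the set {γ | ε ≤ |f γ|} is finite
  have key : ∀ ε : ℝ, 0 < ε → {γ : Γ | ε ≤ |f γ|}.Finite := by
    intro ε hε
    by_contra hinf
    -- bound on the cardinality of finite subsets
    set s : ℝ := 1 - t⁻¹ with hs
    have hs0 : 0 < s := by
      rw [hs]
      have : t⁻¹ < 1 := by
        rw [inv_lt_one_iff₀]; right; exact ht1
      linarith
    set n : ℕ := ⌊(‖φ‖ / ε) ^ s⁻¹⌋₊ + 1 with hn
    have hlt : (‖φ‖ / ε) ^ s⁻¹ < (n : ℝ) := by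
      rw [hn]; push_cast; exact Nat.lt_floor_add_one _
    have hn0 : 0 < (n : ℝ) := by positivity
    have hbase : (0 : ℝ) ≤ (‖φ‖ / ε) ^ s⁻¹ := by positivity
    have hpow : ‖φ‖ / ε < (n : ℝ) ^ s := by
      have := Real.rpow_lt_rpow hbase hlt hs0
      rwa [← Real.rpow_mul (by positivity), inv_mul_cancel₀ hs0.ne', Real.rpow_one] at this
    obtain ⟨S, hS, hcard⟩ := Set.Infinite.exists_subset_card_eq hinf n
    -- build the test vector
    set sgn : Γ → ℝ := fun γ => if 0 ≤ f γ then 1 else -1 with hsgn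
    have hsgn_abs : ∀ γ, ‖sgn γ‖ = 1 := by
      intro γ; rw [hsgn]; by_cases h : 0 ≤ f γ <;> simp [h]
    have hsgn_mul : ∀ γ, sgn γ * f γ = |f γ| := by
      intro γ; rw [hsgn]
      by_cases h : 0 ≤ f γ
      · simp [h, abs_of_nonneg h]
      · push_neg at h; simp [h.not_ge, abs_of_neg h]
    set x : lp (fun _ : Γ => ℝ) p := ∑ γ ∈ S, lp.single p γ (sgn γ) with hx
    have hnormx : ‖x‖ = (n : ℝ) ^ t⁻¹ := by
      have h1 : ‖x‖ ^ t = (n : ℝ) := by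
        rw [hx, lp.norm_sum_single ht0]
        simp only [hsgn_abs, Real.one_rpow]
        rw [Finset.sum_const, hcard, nsmul_eq_mul, mul_one]
      have := congrArg (· ^ t⁻¹) h1
      simpa [Real.rpow_rpow_inv (norm_nonneg x) ht0.ne'] using this
    have hφx : ε * n ≤ φ x := by
      have h1 : φ x = ∑ γ ∈ S, |f γ| := by
        rw [hx, map_sum]
        refine Finset.sum_congr rfl fun γ _ => ?_
        have : lp.single p γ (sgn γ) = (sgn γ • lp.single p γ (1 : ℝ) : lp (fun _ : Γ => ℝ) p) := by
          rw [← lp.single_smul]; norm_num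
        rw [this, map_smul, smul_eq_mul]; exact hsgn_mul γ
      rw [h1]
      calc ε * n = ∑ _γ ∈ S, ε := by rw [Finset.sum_const, hcard, nsmul_eq_mul]; ring
        _ ≤ ∑ γ ∈ S, |f γ| := Finset.sum_le_sum fun γ hγ => hS hγ
    have hub : φ x ≤ ‖φ‖ * (n : ℝ) ^ t⁻¹ := by
      calc φ x ≤ |φ x| := le_abs_self _
        _ = ‖φ x‖ := (Real.norm_eq_abs _).symm
        _ ≤ ‖φ‖ * ‖x‖ := φ.le_opNorm x
        _ = ‖φ‖ * (n : ℝ) ^ t⁻¹ := by rw [hnormx]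
    -- derive the contradiction
    have hmain : ε * n ≤ ‖φ‖ * (n : ℝ) ^ t⁻¹ := le_trans hφx hub
    have hns : (n : ℝ) ^ s = (n : ℝ) / (n : ℝ) ^ t⁻¹ := by
      rw [hs, Real.rpow_sub hn0, Real.rpow_one]
    have hnt0 : (0 : ℝ) < (n : ℝ) ^ t⁻¹ := Real.rpow_pos_of_pos hn0 _
    have : ε * n < ε * n := by
      calc ε * n ≤ ‖φ‖ * (n : ℝ) ^ t⁻¹ := hmain
        _ < (ε * ((n : ℝ) ^ s)) * (n : ℝ) ^ t⁻¹ := by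
            apply mul_lt_mul_of_pos_right _ hnt0
            calc ‖φ‖ = (‖φ‖ / ε) * ε := by field_simp
              _ < (n : ℝ) ^ s * ε := mul_lt_mul_of_pos_right hpow hε
              _ = ε * (n : ℝ) ^ s := mul_comm _ _
        _ = ε * n := by rw [hns]; field_simp
    exact lt_irrefl _ this
  -- conclude countability
  have hsub : {γ : Γ | f γ ≠ 0} ⊆ ⋃ n : ℕ, {γ : Γ | 1 / (n + 1 : ℝ) ≤ |f γ|} := by
    intro γ hγ
    have h0 : 0 < |f γ| := abs_pos.mpr hγ
    obtain ⟨n, hn⟩ := exists_nat_gt (1 / |f γ|)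
    refine Set.mem_iUnion.mpr ⟨n, ?_⟩
    have hn1 : 1 / |f γ| < (n : ℝ) + 1 := lt_trans hn (by linarith)
    have : 1 / ((n : ℝ) + 1) < |f γ| := by
      rw [div_lt_iff₀ (by positivity)]
      rw [div_lt_iff₀ h0] at hn1
      linarith [mul_comm (|f γ|) ((n : ℝ) + 1)]
    exact this.le
  exact Set.Countable.mono hsub
    (Set.countable_iUnion fun n => (key (1 / (n + 1 : ℝ)) (by positivity)).countable)

/-- Let `1 < p < ∞` and let `T : ℓ_p(Γ) → E` be a bounded operator into a Banach
space `E` such that there is an injective bounded operator from the closure of the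
image of `T` into `ℓ_∞`. Then `T e_γ = 0` for all `γ` outside a countable subset `Δ`
of `Γ` (equivalently, `T = T ∘ P_Δ`). -/
theorem lp_operator_countably_supported
    (Γ : Type*) [Nonempty Γ] [DecidableEq Γ] (p : ℝ≥0∞) [Fact (1 ≤ p)] (hp₁ : 1 < p) (hp₂ : p < ∞)
    (E : Type*) [NormedAddCommGroup E] [NormedSpace ℝ E] [CompleteSpace E]
    (T : lp (fun _ : Γ => ℝ) p →L[ℝ] E)
    (U : ↥((LinearMap.range (T : lp (fun _ : Γ => ℝ) p →ₗ[ℝ] E)).topologicalClosure) →L[ℝ]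
      lp (fun _ : ℕ => ℝ) ∞)
    (hU : Function.Injective U) :
    ∃ Δ : Set Γ, Δ.Countable ∧ ∀ γ ∉ Δ, T (lp.single p γ (1 : ℝ)) = 0 := by
  classical
  have hmem : ∀ x, T x ∈ (LinearMap.range (T : lp (fun _ : Γ => ℝ) p →ₗ[ℝ] E)).topologicalClosure :=
    fun x => (LinearMap.range (T : lp (fun _ : Γ => ℝ) p →ₗ[ℝ] E)).le_topologicalClosure ⟨x, rfl⟩
  set T' := T.codRestrict _ hmem with hT'
  -- coordinate evaluation on ℓ∞
  have heval : ∀ n : ℕ, ∃ ev : lp (fun _ : ℕ => ℝ) ∞ →L[ℝ] ℝ, ∀ x, ev x = x n := by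
    intro n
    refine ⟨LinearMap.mkContinuous
      { toFun := fun x : lp (fun _ : ℕ => ℝ) ∞ => x n
        map_add' := fun x y => rfl
        map_smul' := fun c x => rfl } 1
      (fun x => by
        simp only [one_mul]
        exact lp.norm_apply_le_norm ENNReal.top_ne_zero x n), fun x => rfl⟩
  choose ev hev using heval
  set φ : ℕ → (lp (fun _ : Γ => ℝ) p →L[ℝ] ℝ) := fun n => (ev n).comp (U.comp T') with hφ
  refine ⟨⋃ n : ℕ, {γ : Γ | φ n (lp.single p γ (1 : ℝ)) ≠ 0}, ?_, ?_⟩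
  · exact Set.countable_iUnion fun n => lp_functional_countable_support p hp₁ hp₂ (φ n)
  · intro γ hγ
    simp only [Set.mem_iUnion, Set.mem_setOf_eq, not_exists, not_ne_iff] at hγ
    have hUz : U (T' (lp.single p γ (1 : ℝ))) = 0 := by
      apply lp.ext
      funext n
      have := hγ n
      rw [hφ] at this
      simp only [ContinuousLinearMap.comp_apply] at this
      rw [hev n] at this
      simpa [lp.coeFn_zero] using this
    have : T' (lp.single p γ (1 : ℝ)) = 0 := hU (by rw [hUz, map_zero])
    have := congrArg (Subtype.val) this
    simpa [hT', ContinuousLinearMap.coe_codRestrict_apply] using this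
end

section
/- Every bounded operator from c₀(Γ) into a separable Banach space E factors through c₀: there exist bounded operators U : c₀(Γ) → c₀ and V : c₀ → E with T = V ∘ U. -/
/-!
A separable normed space is separated by a sequence of functionals `gₙ`. A functional on `c₀(Γ)`
only sees countably many coordinates: its values on the unit vectors are absolutely summable, and
finitely supported vectors are dense. Hence `T x` only depends on `x` restricted to a countable set
`S`, and `T` factors through restriction to an enumeration `e : ℕ → Γ` of a countably infinite
superset of `S`, followed by `T ∘ (extension by zero along e)`.
-/

open scoped ZeroAtInfty Topology
open Filter Set Function

theorem Set.Countable.exists_injective_nat_range_superset {α : Type*} [Infinite α] {S : Set α}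
    (hS : S.Countable) : ∃ e : ℕ → α, Injective e ∧ S ⊆ range e := by
  set t := S ∪ range (_root_.Infinite.natEmbedding α)
  have : Countable t := (hS.union (countable_range _)).to_subtype
  have : Infinite t :=
    ((infinite_range_of_injective (_root_.Infinite.natEmbedding α).injective).mono
      subset_union_right).to_subtype
  obtain ⟨q⟩ := nonempty_equiv_of_countable (α := ℕ) (β := t)
  refine ⟨Subtype.val ∘ q, Subtype.val_injective.comp q.injective, fun a ha => ?_⟩
  exact ⟨q.symm ⟨a, subset_union_left ha⟩, by simp⟩

theorem exists_separating_seq_strongDual (𝕜 E : Type*) [RCLike 𝕜] [NormedAddCommGroup E]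
    [NormedSpace 𝕜 E] [TopologicalSpace.SeparableSpace E] :
    ∃ g : ℕ → StrongDual 𝕜 E, ∀ v, (∀ n, g n v = 0) → v = 0 := by
  have : Nonempty E := ⟨0⟩
  obtain ⟨u, hu⟩ := TopologicalSpace.exists_dense_seq E
  choose g hg_norm hg_apply using fun n => exists_dual_vector'' 𝕜 (u n)
  refine ⟨g, fun v hv => norm_le_zero_iff.1 (not_lt.1 fun hv_pos => ?_)⟩
  obtain ⟨n, hn⟩ := Metric.denseRange_iff.1 hu v (‖v‖ / 2) (half_pos hv_pos)
  rw [dist_eq_norm] at hn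
  -- `g n` norms `u n` but kills `v`, so `u n` is no longer than its distance to `v`.
  have hun : ‖u n‖ ≤ ‖v - u n‖ := calc
    ‖u n‖ = ‖g n (u n - v)‖ := by simp [map_sub, hv n, hg_apply n]
    _ ≤ ‖u n - v‖ := by simpa using (g n).le_of_opNorm_le (hg_norm n) (u n - v)
    _ = ‖v - u n‖ := norm_sub_rev _ _
  have := norm_le_insert' v (u n)
  linarith [norm_sub_rev v (u n)]

theorem Function.Injective.tendsto_extend_zero_cofinite {α β F : Type*} [Zero F]
    [TopologicalSpace F] {e : α → β} (he : Injective e) {y : α → F}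
    (hy : Tendsto y cofinite (𝓝 0)) : Tendsto (extend e y 0) cofinite (𝓝 0) := by
  intro s hs
  refine ((hy hs).image e).subset fun b hb => ?_
  by_cases h : ∃ a, e a = b
  · obtain ⟨a, rfl⟩ := h
    exact ⟨a, by simpa [he.extend_apply] using hb, rfl⟩
  · exact absurd (by simpa [extend_apply' _ _ _ h] using mem_of_mem_nhds hs) hb

namespace ZeroAtInftyContinuousMap

section Norm

variable {α F : Type*} [TopologicalSpace α] [NormedAddCommGroup F]

theorem norm_apply_le (x : C₀(α, F)) (a : α) : ‖x a‖ ≤ ‖x‖ := by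
  rw [← norm_toBCF_eq_norm]
  exact x.toBCF.norm_coe_le_norm a

theorem norm_le_of_forall_norm_apply_le {x : C₀(α, F)} {C : ℝ} (hC : 0 ≤ C)
    (h : ∀ a, ‖x a‖ ≤ C) : ‖x‖ ≤ C := by
  rw [← norm_toBCF_eq_norm]
  exact (BoundedContinuousFunction.norm_le hC).2 h

theorem coe_sum {ι : Type*} (s : Finset ι) (x : ι → C₀(α, F)) :
    ⇑(∑ i ∈ s, x i) = ∑ i ∈ s, ⇑(x i) :=
  map_sum (⟨⟨DFunLike.coe, coe_zero⟩, coe_add⟩ : C₀(α, F) →+ α → F) x s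

end Norm

section Discrete

variable {α β F : Type*} [TopologicalSpace α] [DiscreteTopology α]
  [TopologicalSpace β] [DiscreteTopology β] [NormedAddCommGroup F]

theorem tendsto_cofinite (x : C₀(α, F)) : Tendsto x cofinite (𝓝 0) :=
  cocompact_eq_cofinite α ▸ zero_at_infty x

theorem finite_setOf_le_norm (x : C₀(α, F)) {ε : ℝ} (hε : 0 < ε) :
    {a | ε ≤ ‖x a‖}.Finite := by
  simpa using eventually_cofinite.1 <|
    (tendsto_zero_iff_norm_tendsto_zero.1 x.tendsto_cofinite).eventually (gt_mem_nhds hε)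

def ofTendstoCofinite (f : α → F) (hf : Tendsto f cofinite (𝓝 0)) : C₀(α, F) where
  toFun := f
  continuous_toFun := continuous_of_discreteTopology
  zero_at_infty' := cocompact_eq_cofinite α ▸ hf

@[simp]
theorem coe_ofTendstoCofinite (f : α → F) (hf : Tendsto f cofinite (𝓝 0)) :
    ⇑(ofTendstoCofinite f hf) = f :=
  rfl

variable (𝕜 : Type*) [NormedField 𝕜] [NormedSpace 𝕜 F] {e : α → β} (he : Injective e)

noncomputable def compInjectiveCLM : C₀(β, F) →L[𝕜] C₀(α, F) :=
  LinearMap.mkContinuous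
    { toFun x := ofTendstoCofinite (x ∘ e) (x.tendsto_cofinite.comp he.tendsto_cofinite)
      map_add' _ _ := rfl
      map_smul' _ _ := rfl }
    1 fun x => by
      simpa only [one_mul] using
        norm_le_of_forall_norm_apply_le (norm_nonneg x) fun a => x.norm_apply_le (e a)

@[simp]
theorem compInjectiveCLM_apply (x : C₀(β, F)) (a : α) : compInjectiveCLM 𝕜 he x a = x (e a) :=
  rfl

noncomputable def extendZeroCLM : C₀(α, F) →L[𝕜] C₀(β, F) :=
  LinearMap.mkContinuous
    { toFun y :=
        ofTendstoCofinite (extend e y 0) (he.tendsto_extend_zero_cofinite y.tendsto_cofinite)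
      map_add' y z := by
        ext b
        simpa using congrFun (extend_add e y z 0 0) b
      map_smul' c y := by
        ext b
        simpa using congrFun (extend_smul c e y 0) b }
    1 fun y => by
      refine (one_mul ‖y‖).symm ▸ norm_le_of_forall_norm_apply_le (norm_nonneg y) fun b => ?_
      by_cases h : ∃ a, e a = b
      · obtain ⟨a, rfl⟩ := h
        simpa [he.extend_apply] using y.norm_apply_le a
      · simp [extend_apply' _ _ _ h]

@[simp]
theorem extendZeroCLM_apply (y : C₀(α, F)) (a : α) : extendZeroCLM 𝕜 he y (e a) = y a :=
  he.extend_apply _ _ a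

end Discrete

section Real

variable {α : Type*} [TopologicalSpace α] [DiscreteTopology α]

variable (α) in
noncomputable def single (a : α) : C₀(α, ℝ) :=
  ofTendstoCofinite (({a} : Set α).indicator 1) <| tendsto_const_nhds.congr' <|
    (finite_singleton a).eventually_cofinite_notMem.mono fun _ hb => (indicator_of_notMem hb _).symm

theorem sum_smul_single_apply (s : Finset α) (c : α → ℝ) (b : α) :
    (∑ a ∈ s, c a • single α a) b = (s : Set α).indicator c b := by
  classical
  simp [coe_sum, single, Finset.sum_apply, Set.indicator_apply, Pi.single_apply, Finset.sum_ite_eq]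

theorem exists_norm_sub_sum_smul_single_lt (x : C₀(α, ℝ)) {ε : ℝ} (hε : 0 < ε) :
    ∃ s : Finset α, ‖x - ∑ a ∈ s, x a • single α a‖ < ε := by
  refine ⟨(x.finite_setOf_le_norm (half_pos hε)).toFinset, ?_⟩
  refine (norm_le_of_forall_norm_apply_le (half_pos hε).le fun b => ?_).trans_lt (half_lt_self hε)
  by_cases hb : ε / 2 ≤ |x b|
  · simp [sum_smul_single_apply, hb, (half_pos hε).le]
  · simpa [sum_smul_single_apply, Set.indicator_apply, hb] using (not_le.1 hb).le

theorem countable_setOf_apply_single_ne_zero (f : StrongDual ℝ C₀(α, ℝ)) :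
    {a | f (single α a) ≠ 0}.Countable := by
  have hsum : Summable fun a => |f (single α a)| := by
    refine summable_of_sum_le (fun a => abs_nonneg _) (c := ‖f‖) fun s => ?_
    -- test `f` against the sign pattern of its values on `s`
    set v := ∑ a ∈ s, (SignType.sign (f (single α a)) : ℝ) • single α a
    have hv : ‖v‖ ≤ 1 := norm_le_of_forall_norm_apply_le zero_le_one fun b => by
      rw [sum_smul_single_apply]
      by_cases hb : b ∈ s
      · rw [indicator_of_mem hb, Real.norm_eq_abs]
        cases SignType.sign (f (single α b)) <;> simp
      · simp [hb]
    calc ∑ a ∈ s, |f (single α a)| = f v := by simp [v, map_sum, sign_mul_self]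
      _ ≤ ‖f‖ * ‖v‖ := (le_abs_self _).trans (f.le_opNorm v)
      _ ≤ ‖f‖ := mul_le_of_le_one_right (norm_nonneg f) hv
  simpa [Function.support] using hsum.countable_support

theorem apply_eq_zero_of_eqOn_zero (f : StrongDual ℝ C₀(α, ℝ)) {z : C₀(α, ℝ)}
    (hz : EqOn z 0 {a | f (single α a) ≠ 0}) : f z = 0 := by
  have hker (s : Finset α) : f (∑ a ∈ s, z a • single α a) = 0 := by
    refine (map_sum f _ s).trans (Finset.sum_eq_zero fun a _ => ?_)
    by_cases ha : f (single α a) = 0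
    · simp [ha]
    · simp [hz ha]
  refine f.isClosed_ker.closure_subset (Metric.mem_closure_iff.2 fun ε hε => ?_)
  obtain ⟨s, hs⟩ := z.exists_norm_sub_sum_smul_single_lt hε
  exact ⟨_, hker s, by rwa [dist_eq_norm]⟩

theorem exists_countable_eqOn_zero_imp_map_eq_zero {E : Type*} [NormedAddCommGroup E]
    [NormedSpace ℝ E] [TopologicalSpace.SeparableSpace E] (T : C₀(α, ℝ) →L[ℝ] E) :
    ∃ S : Set α, S.Countable ∧ ∀ x : C₀(α, ℝ), EqOn x 0 S → T x = 0 := by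
  obtain ⟨g, hg⟩ := exists_separating_seq_strongDual ℝ E
  refine ⟨⋃ n, {a | (g n ∘L T) (single α a) ≠ 0},
    countable_iUnion fun n => countable_setOf_apply_single_ne_zero _, fun x hx => hg _ fun n => ?_⟩
  exact apply_eq_zero_of_eqOn_zero (g n ∘L T) (hx.mono (subset_iUnion_of_subset n subset_rfl))

end Real

end ZeroAtInftyContinuousMap

open ZeroAtInftyContinuousMap

theorem operator_from_c0Gamma_factors_through_c0_general
    (Γ : Type*) [Uncountable Γ] [TopologicalSpace Γ] [DiscreteTopology Γ]
    (E : Type*) [NormedAddCommGroup E] [NormedSpace ℝ E]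
    [TopologicalSpace.SeparableSpace E]
    (T : C₀(Γ, ℝ) →L[ℝ] E) :
    ∃ (U : C₀(Γ, ℝ) →L[ℝ] C₀(ℕ, ℝ)) (V : C₀(ℕ, ℝ) →L[ℝ] E), T = V.comp U := by
  obtain ⟨S, hS, hT⟩ := exists_countable_eqOn_zero_imp_map_eq_zero T
  obtain ⟨e, he, hSe⟩ := hS.exists_injective_nat_range_superset
  refine ⟨compInjectiveCLM ℝ he, T ∘L extendZeroCLM ℝ he, ContinuousLinearMap.ext fun x => ?_⟩
  have hround : EqOn (x - extendZeroCLM ℝ he (compInjectiveCLM ℝ he x)) 0 S := fun b hb => by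
    obtain ⟨a, rfl⟩ := hSe hb
    simp
  simpa [sub_eq_zero] using hT _ hround

/-- Every bounded operator `T` from `c₀(Γ)` (`Γ` uncountable) into a separable
Banach space `E` factors through `c₀ = c₀(ℕ)`: there are bounded operators
`U : c₀(Γ) → c₀` and `V : c₀ → E` with `T = V ∘ U`. Here `c₀(Γ)` is realised as
`C₀(Γ, ℝ)` for `Γ` discrete. -/
theorem operator_from_c0Gamma_factors_through_c0
    (Γ : Type*) [Uncountable Γ] [TopologicalSpace Γ] [DiscreteTopology Γ]
    (E : Type*) [NormedAddCommGroup E] [NormedSpace ℝ E] [CompleteSpace E]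
    [TopologicalSpace.SeparableSpace E]
    (T : C₀(Γ, ℝ) →L[ℝ] E) :
    ∃ (U : C₀(Γ, ℝ) →L[ℝ] C₀(ℕ, ℝ)) (V : C₀(ℕ, ℝ) →L[ℝ] E), T = V.comp U :=
  operator_from_c0Gamma_factors_through_c0_general Γ E T
end

section
/- c₀ contains a closed subspace isomorphic to the c₀-direct sum (⊕_{n∈ℕ} ℓ₂ⁿ)_{c₀}. -/
open scoped ZeroAtInfty ENNReal
open Filter

set_option linter.unnecessarySimpa false in
/-- The `c₀`-direct sum `(⊕_n E_n)_{c₀}`: the subspace of the `ℓ_∞`-product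
consisting of those sequences `(x_n)` with `‖x_n‖ → 0`. -/
noncomputable def c0DirectSum (E : ℕ → Type*) [∀ n, NormedAddCommGroup (E n)]
    [∀ n, NormedSpace ℝ (E n)] : Submodule ℝ (lp E ∞) where
  carrier := {x | Tendsto (fun n => ‖(x : ∀ n, E n) n‖) atTop (nhds 0)}
  zero_mem' := by
    simpa [lp.coeFn_zero] using (tendsto_const_nhds : Tendsto (fun _ : ℕ => (0:ℝ)) atTop _)
  add_mem' := by
    intro a b ha hb
    refine squeeze_zero (fun n => norm_nonneg _)
      (g := fun n => ‖(a : ∀ n, E n) n‖ + ‖(b : ∀ n, E n) n‖) (fun n => ?_)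
      (by simpa using ha.add hb)
    simp only [lp.coeFn_add, Pi.add_apply]
    exact norm_add_le _ _
  smul_mem' := by
    intro c x hx
    have : Tendsto (fun n => ‖c‖ * ‖(x : ∀ n, E n) n‖) atTop (nhds 0) := by
      simpa using hx.const_mul ‖c‖
    refine this.congr fun n => ?_
    simp [lp.coeFn_smul, norm_smul]


/-! A finite `1/2`-net `(a n i)ᵢ` of the unit sphere of `ℓ₂ⁿ` norms `ℓ₂ⁿ` up to the factor `2`:
`‖v‖ ≤ 2 * maxᵢ ⟪a n i, v⟫`. So `x ↦ (⟪a n i, x n⟫)_(n, i)`, with the pairs `(n, i)` enumerated by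
`Nat.unpair`, maps `(⊕ₙ ℓ₂ⁿ)_c₀` into `c₀` with `‖x‖ / 2 ≤ ‖T x‖ ≤ ‖x‖`. The `c₀`-sum is complete,
so the range of this embedding is closed and the open mapping theorem identifies the two. -/

open scoped RealInnerProductSpace
open Metric Topology

section Norming

variable {E : Type*} [NormedAddCommGroup E] [InnerProductSpace ℝ E]

theorem norm_le_two_mul_inner_of_dist_lt {x y : E} (h : dist (‖x‖⁻¹ • x) y < 1 / 2) :
    ‖x‖ ≤ 2 * ⟪y, x⟫ := by
  have hself : ⟪‖x‖⁻¹ • x, x⟫ = ‖x‖ := by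
    rcases eq_or_ne x 0 with rfl | hx
    · simp
    · rw [real_inner_smul_left, real_inner_self_eq_norm_sq]
      field_simp
  have herr : ⟪‖x‖⁻¹ • x - y, x⟫ ≤ ‖x‖ / 2 := calc
    ⟪‖x‖⁻¹ • x - y, x⟫ ≤ ‖‖x‖⁻¹ • x - y‖ * ‖x‖ := real_inner_le_norm _ _
    _ ≤ 1 / 2 * ‖x‖ := by
      gcongr
      rw [← dist_eq_norm]
      exact h.le
    _ = ‖x‖ / 2 := by ring
  rw [inner_sub_left, hself] at herr
  linarith

variable [ProperSpace E]

theorem exists_finite_subset_sphere_norming :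
    ∃ t ⊆ sphere (0 : E) 1, t.Finite ∧ ∀ x ≠ 0, ∃ y ∈ t, ‖x‖ ≤ 2 * ⟪y, x⟫ := by
  obtain ⟨t, hts, ht, hcover⟩ :=
    finite_cover_balls_of_compact (isCompact_sphere (0 : E) 1) (by norm_num : (0 : ℝ) < 1 / 2)
  refine ⟨t, hts, ht, fun x hx => ?_⟩
  have hu : ‖x‖⁻¹ • x ∈ sphere (0 : E) 1 := by
    simp [norm_smul, inv_mul_cancel₀ (norm_ne_zero_iff.2 hx)]
  obtain ⟨y, hyt, hy⟩ := Set.mem_iUnion₂.1 (hcover hu)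
  exact ⟨y, hyt, norm_le_two_mul_inner_of_dist_lt (mem_ball.1 hy)⟩

theorem exists_norming_seq :
    ∃ a : ℕ → E, (∀ i, ‖a i‖ ≤ 1) ∧ {i | a i ≠ 0}.Finite ∧
      ∀ x, ∃ i, ‖x‖ ≤ 2 * ⟪a i, x⟫ := by
  obtain ⟨t, hts, ht, hnorming⟩ := exists_finite_subset_sphere_norming (E := E)
  obtain ⟨m, f, rfl⟩ := ht.fin_embedding
  refine ⟨fun i => if h : i < m then f ⟨i, h⟩ else 0, fun i => ?_, ?_, fun x => ?_⟩
  · dsimp only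
    split_ifs
    · exact (mem_sphere_zero_iff_norm.1 (hts ⟨_, rfl⟩)).le
    · simp
  · refine (Set.finite_Iio m).subset fun i hi => ?_
    by_contra him
    exact hi (dif_neg him)
  · rcases eq_or_ne x 0 with rfl | hx
    · exact ⟨m, by simp⟩
    · obtain ⟨-, ⟨j, rfl⟩, hj⟩ := hnorming x hx
      exact ⟨j, by simpa [j.2] using hj⟩

end Norming

theorem tendsto_zero_cofinite_prod_of_norm_le {α β F : Type*} [NormedAddCommGroup F]
    {f : α × β → F} {g : α → ℝ} (hg : Tendsto g cofinite (𝓝 0)) (hfg : ∀ p, ‖f p‖ ≤ g p.1)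
    (hf : ∀ a, {b | f (a, b) ≠ 0}.Finite) : Tendsto f cofinite (𝓝 0) := by
  refine tendsto_zero_iff_norm_tendsto_zero.2 <| tendsto_order.2 ⟨fun ε hε => ?_, fun ε hε => ?_⟩
  · exact Eventually.of_forall fun p => hε.trans_le (norm_nonneg _)
  · have hs : {a | ¬ g a < ε}.Finite := eventually_cofinite.1 (hg.eventually (gt_mem_nhds hε))
    refine eventually_cofinite.2 <| (hs.biUnion fun a _ => (hf a).image (Prod.mk a)).subset ?_
    rintro ⟨a, b⟩ hab
    refine Set.mem_biUnion (x := a) (fun hga => hab ((hfg _).trans_lt hga))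
      ⟨b, fun hzero => ?_, rfl⟩
    simp only [Set.mem_ofPred_eq, hzero, norm_zero, not_lt] at hab
    linarith

section C0DirectSum

variable {E : ℕ → Type*} [∀ n, NormedAddCommGroup (E n)]

section NormedSpace

variable [∀ n, NormedSpace ℝ (E n)]

theorem mem_c0DirectSum {x : lp E ∞} :
    x ∈ c0DirectSum E ↔ Tendsto (fun n => ‖x n‖) atTop (𝓝 0) := Iff.rfl

theorem isClosed_c0DirectSum :
    IsClosed (c0DirectSum E : Set (lp E ∞)) := by
  refine isClosed_of_closure_subset fun x hx => mem_c0DirectSum.2 <|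
    tendsto_order.2 ⟨fun ε hε => Eventually.of_forall fun n => hε.trans_le (norm_nonneg _),
      fun ε hε => ?_⟩
  obtain ⟨y, hy, hxy⟩ := Metric.mem_closure_iff.1 hx (ε / 2) (half_pos hε)
  filter_upwards [(mem_c0DirectSum.1 hy).eventually (gt_mem_nhds (half_pos hε))] with n hn
  calc ‖x n‖ ≤ ‖x n - y n‖ + ‖y n‖ := norm_le_norm_sub_add _ _
    _ ≤ ‖x - y‖ + ‖y n‖ := by
      gcongr
      exact lp.norm_apply_le_norm ENNReal.top_ne_zero (x - y) n
    _ < ε / 2 + ε / 2 := by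
      rw [← dist_eq_norm]
      gcongr
    _ = ε := add_halves ε

instance [∀ n, CompleteSpace (E n)] : CompleteSpace (c0DirectSum E) :=
  isClosed_c0DirectSum.completeSpace_coe

end NormedSpace

variable [∀ n, InnerProductSpace ℝ (E n)] (a : ∀ n, ℕ → E n)

noncomputable def innerCoord (x : c0DirectSum E) (p : ℕ × ℕ) : ℝ :=
  ⟪a p.1 p.2, (x : lp E ∞) p.1⟫

theorem abs_innerCoord_le (ha : ∀ n i, ‖a n i‖ ≤ 1) (x : c0DirectSum E) (p : ℕ × ℕ) :
    |innerCoord a x p| ≤ ‖(x : lp E ∞) p.1‖ :=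
  (abs_real_inner_le_norm _ _).trans <| mul_le_of_le_one_left (norm_nonneg _) (ha _ _)

theorem tendsto_innerCoord (ha : ∀ n i, ‖a n i‖ ≤ 1) (hfin : ∀ n, {i | a n i ≠ 0}.Finite)
    (x : c0DirectSum E) : Tendsto (innerCoord a x) cofinite (𝓝 0) :=
  tendsto_zero_cofinite_prod_of_norm_le
    (by simpa only [Nat.cofinite_eq_atTop] using mem_c0DirectSum.1 x.2) (abs_innerCoord_le a ha x)
    fun n => (hfin n).subset fun i hi h => hi (by simp [innerCoord, h])

theorem norm_innerCoord_le (ha : ∀ n i, ‖a n i‖ ≤ 1) (x : c0DirectSum E) (p : ℕ × ℕ) :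
    ‖innerCoord a x p‖ ≤ ‖x‖ :=
  (abs_innerCoord_le a ha x p).trans (lp.norm_apply_le_norm ENNReal.top_ne_zero _ _)

noncomputable def innerCoordCLM (ha : ∀ n i, ‖a n i‖ ≤ 1)
    (hfin : ∀ n, {i | a n i ≠ 0}.Finite) : c0DirectSum E →L[ℝ] C₀(ℕ, ℝ) :=
  LinearMap.mkContinuous
    { toFun := fun x => ⟨⟨innerCoord a x ∘ Nat.unpair, continuous_of_discreteTopology⟩, by
        rw [cocompact_eq_cofinite]
        exact (tendsto_innerCoord a ha hfin x).comp Nat.pairEquiv.symm.injective.tendsto_cofinite⟩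
      map_add' := fun _ _ => ZeroAtInftyContinuousMap.ext fun _ => inner_add_right _ _ _
      map_smul' := fun _ _ => ZeroAtInftyContinuousMap.ext fun _ => real_inner_smul_right _ _ _ }
    1 fun x => by
      rw [one_mul, ← ZeroAtInftyContinuousMap.norm_toBCF_eq_norm]
      exact (BoundedContinuousFunction.norm_le (norm_nonneg _)).2 fun _ =>
        norm_innerCoord_le a ha x _

@[simp]
theorem innerCoordCLM_apply (ha : ∀ n i, ‖a n i‖ ≤ 1) (hfin : ∀ n, {i | a n i ≠ 0}.Finite)
    (x : c0DirectSum E) (k : ℕ) : innerCoordCLM a ha hfin x k = innerCoord a x (Nat.unpair k) :=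
  rfl

theorem norm_le_two_mul_norm_innerCoordCLM (ha : ∀ n i, ‖a n i‖ ≤ 1)
    (hfin : ∀ n, {i | a n i ≠ 0}.Finite) (hnorming : ∀ n (v : E n), ∃ i, ‖v‖ ≤ 2 * ⟪a n i, v⟫)
    (x : c0DirectSum E) : ‖x‖ ≤ 2 * ‖innerCoordCLM a ha hfin x‖ := by
  refine lp.norm_le_of_forall_le (by positivity) fun n => ?_
  obtain ⟨i, hi⟩ := hnorming n ((x : lp E ∞) n)
  have hcoord : ⟪a n i, (x : lp E ∞) n⟫ = innerCoordCLM a ha hfin x (Nat.pair n i) := by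
    rw [innerCoordCLM_apply, Nat.unpair_pair, innerCoord]
  calc ‖(x : lp E ∞) n‖ ≤ 2 * innerCoordCLM a ha hfin x (Nat.pair n i) := hcoord ▸ hi
    _ ≤ 2 * ‖innerCoordCLM a ha hfin x‖ := by
      gcongr
      rw [← ZeroAtInftyContinuousMap.norm_toBCF_eq_norm]
      exact (le_abs_self _).trans ((innerCoordCLM a ha hfin x).toBCF.norm_coe_le_norm _)

end C0DirectSum

/-- `c₀` contains a closed subspace isomorphic to the `c₀`-direct sum
`(⊕_{n∈ℕ} ℓ₂ⁿ)_{c₀}`. -/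
theorem c0_contains_c0_sum_of_euclidean :
    ∃ S : Submodule ℝ C₀(ℕ, ℝ), IsClosed (S : Set C₀(ℕ, ℝ)) ∧
      Nonempty (↥(c0DirectSum (fun n => EuclideanSpace ℝ (Fin n))) ≃L[ℝ] ↥S) := by
  choose a ha hfin hnorming using fun n => exists_norming_seq (E := EuclideanSpace ℝ (Fin n))
  set T := innerCoordCLM a ha hfin
  have hT : AntilipschitzWith 2 T := T.antilipschitz_of_bound fun x => by
    exact_mod_cast norm_le_two_mul_norm_innerCoordCLM a ha hfin hnorming x
  have hclosed : IsClosed (Set.range T) := hT.isClosed_range T.uniformContinuous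
  exact ⟨_, hclosed, ⟨T.equivRange hT.injective hclosed⟩⟩
end

section
/- ℓ₁ contains a closed subspace isomorphic to the ℓ₁-direct sum (⊕_{n∈ℕ} ℓ₂ⁿ)_{ℓ₁}. -/
/-!
Khintchine's inequality with constant `√3`: for `x ∈ ℓ₂ⁿ`, the average of `|∑ ±xᵢ|` over all
`2ⁿ` sign patterns lies between `‖x‖ / √3` and `‖x‖`. The upper bound is Cauchy–Schwarz against
the exact second moment; the lower bound interpolates the second moment between the first and
the fourth, and the fourth moment is at most `3‖x‖⁴`. So `x ↦ (2⁻ⁿ ∑ ±xᵢ)_ε` embeds `ℓ₂ⁿ` into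
`ℓ₁^{2ⁿ}` with distortion `√3`, and the `ℓ₁`-sum of these embeddings maps
`(⊕ₙ ℓ₂ⁿ)_{ℓ₁}` into `ℓ₁(Σ n, {±1}ⁿ) ≅ ℓ₁`. Being bounded below, it is an isomorphism onto a
closed subspace.
-/

open Finset
open scoped NNReal

theorem Finset.sum_sq_pow_three_le {ι : Type*} (s : Finset ι) (f : ι → ℝ) :
    (∑ i ∈ s, f i ^ 2) ^ 3 ≤ (∑ i ∈ s, |f i|) ^ 2 * ∑ i ∈ s, f i ^ 4 := by
  set A := ∑ i ∈ s, |f i|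
  set B := ∑ i ∈ s, f i ^ 2
  set C := ∑ i ∈ s, f i ^ 4
  have hAD : B ^ 2 ≤ A * ∑ i ∈ s, |f i| ^ 3 :=
    sum_sq_le_sum_mul_sum_of_sq_le_mul s (fun i _ => abs_nonneg _) (fun i _ => by positivity)
      fun i _ => le_of_eq <| by rw [← sq_abs (f i)]; ring
  have hDB : (∑ i ∈ s, |f i| ^ 3) ^ 2 ≤ B * C :=
    sum_sq_le_sum_mul_sum_of_sq_le_mul s (fun i _ => sq_nonneg _) (fun i _ => by positivity)
      fun i _ => le_of_eq <| by rw [show f i ^ 4 = (f i ^ 2) ^ 2 by ring, ← sq_abs (f i)]; ring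
  rcases (show 0 ≤ B from sum_nonneg fun i _ => sq_nonneg (f i)).eq_or_lt with hB | hB
  · rw [← hB, zero_pow three_ne_zero]
    exact mul_nonneg (sq_nonneg A) (sum_nonneg fun i _ => by positivity)
  · refine le_of_mul_le_mul_right ?_ hB
    calc B ^ 3 * B = (B ^ 2) ^ 2 := by ring
      _ ≤ (A * ∑ i ∈ s, |f i| ^ 3) ^ 2 := pow_le_pow_left₀ (by positivity) hAD 2
      _ = A ^ 2 * (∑ i ∈ s, |f i| ^ 3) ^ 2 := by ring
      _ ≤ A ^ 2 * (B * C) := by gcongr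
      _ = A ^ 2 * C * B := by ring

def rademacherSum {n : ℕ} (ε : Fin n → Bool) (x : Fin n → ℝ) : ℝ :=
  ∑ i, (bif ε i then 1 else -1) * x i

lemma rademacherSum_cons {n : ℕ} (b : Bool) (ε : Fin n → Bool) (x : Fin (n + 1) → ℝ) :
    rademacherSum (Fin.cons b ε) x =
      (bif b then 1 else -1) * x 0 + rademacherSum ε (Fin.tail x) := by
  simp [rademacherSum, Fin.sum_univ_succ, Fin.tail]

lemma sum_signs_succ {n : ℕ} (F : (Fin (n + 1) → Bool) → ℝ) :
    ∑ ε, F ε = ∑ ε : Fin n → Bool, (F (Fin.cons true ε) + F (Fin.cons false ε)) := by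
  rw [← (Fin.consEquiv fun _ => Bool).sum_comp, Fintype.sum_prod_type, Fintype.sum_bool,
    ← sum_add_distrib]
  rfl

lemma sum_rademacherSum_sq {n : ℕ} (x : Fin n → ℝ) :
    ∑ ε, rademacherSum ε x ^ 2 = 2 ^ n * ∑ i, x i ^ 2 := by
  induction n with
  | zero => simp [rademacherSum]
  | succ n ih =>
    simp only [sum_signs_succ, rademacherSum_cons, cond_true, cond_false, one_mul, neg_one_mul]
    have hpair : ∀ y : ℝ, (x 0 + y) ^ 2 + (-x 0 + y) ^ 2 = 2 * x 0 ^ 2 + 2 * y ^ 2 :=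
      fun y => by ring
    simp only [hpair, sum_add_distrib, ← mul_sum, ih, sum_const, card_univ, Fintype.card_fun,
      Fintype.card_bool, Fintype.card_fin, nsmul_eq_mul, Fin.sum_univ_succ (fun i => x i ^ 2)]
    simp only [Fin.tail]
    push_cast
    ring

lemma sum_rademacherSum_pow_four_le {n : ℕ} (x : Fin n → ℝ) :
    ∑ ε, rademacherSum ε x ^ 4 ≤ 3 * 2 ^ n * (∑ i, x i ^ 2) ^ 2 := by
  induction n with
  | zero => simp [rademacherSum]
  | succ n ih =>
    simp only [sum_signs_succ, rademacherSum_cons, cond_true, cond_false, one_mul, neg_one_mul]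
    have hpair : ∀ y : ℝ,
        (x 0 + y) ^ 4 + (-x 0 + y) ^ 4 = 2 * x 0 ^ 4 + 12 * x 0 ^ 2 * y ^ 2 + 2 * y ^ 4 :=
      fun y => by ring
    have h2 := sum_rademacherSum_sq (Fin.tail x)
    simp only [hpair, sum_add_distrib, ← mul_sum, h2, sum_const, card_univ, Fintype.card_fun,
      Fintype.card_bool, Fintype.card_fin, nsmul_eq_mul, Fin.sum_univ_succ (fun i => x i ^ 2)]
    have h4 := ih (Fin.tail x)
    simp only [Fin.tail] at h2 h4 ⊢
    push_cast
    rw [pow_succ (2 : ℝ) n]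
    nlinarith [mul_nonneg (pow_nonneg zero_le_two n) (pow_nonneg (sq_nonneg (x 0)) 2)]

lemma sum_abs_rademacherSum_le {n : ℕ} (x : EuclideanSpace ℝ (Fin n)) :
    ∑ ε, |rademacherSum ε x.ofLp| ≤ 2 ^ n * ‖x‖ := by
  refine le_of_pow_le_pow_left₀ two_ne_zero (by positivity) ?_
  calc (∑ ε, |rademacherSum ε x.ofLp|) ^ 2
      ≤ (univ : Finset (Fin n → Bool)).card * ∑ ε, |rademacherSum ε x.ofLp| ^ 2 :=
        sq_sum_le_card_mul_sum_sq
    _ = (2 ^ n * ‖x‖) ^ 2 := by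
        simp only [sq_abs, sum_rademacherSum_sq, ← EuclideanSpace.real_norm_sq_eq, card_univ,
          Fintype.card_fun, Fintype.card_bool, Fintype.card_fin]
        push_cast
        ring

lemma le_sqrt_three_mul_sum_abs_rademacherSum {n : ℕ} (x : EuclideanSpace ℝ (Fin n)) :
    2 ^ n * ‖x‖ ≤ √3 * ∑ ε, |rademacherSum ε x.ofLp| := by
  set A := ∑ ε, |rademacherSum ε x.ofLp|
  have hcube : (2 ^ n * ‖x‖ ^ 2) ^ 3 ≤ A ^ 2 * (3 * 2 ^ n * (‖x‖ ^ 2) ^ 2) := by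
    have h := sum_sq_pow_three_le univ fun ε => rademacherSum ε x.ofLp
    rw [sum_rademacherSum_sq, ← EuclideanSpace.real_norm_sq_eq] at h
    refine h.trans (mul_le_mul_of_nonneg_left ?_ (sq_nonneg A))
    simpa only [EuclideanSpace.real_norm_sq_eq] using sum_rademacherSum_pow_four_le x.ofLp
  refine le_of_pow_le_pow_left₀ two_ne_zero (by positivity) ?_
  rcases (norm_nonneg x).eq_or_lt with hx | hx
  · rw [← hx, mul_zero, zero_pow two_ne_zero]; positivity
  · rw [mul_pow, mul_pow, Real.sq_sqrt zero_le_three]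
    refine le_of_mul_le_mul_right ?_ (by positivity : (0 : ℝ) < 2 ^ n * ‖x‖ ^ 4)
    linear_combination hcube

namespace lp

variable {α : Type*} {E : α → Type*} [∀ a, NormedAddCommGroup (E a)]

lemma norm_eq_tsum_norm (f : lp E 1) : ‖f‖ = ∑' a, ‖f a‖ := by
  simpa using lp.norm_eq_tsum_rpow (by simp) f

lemma summable_norm (f : lp E 1) : Summable fun a => ‖f a‖ := by
  simpa using (lp.memℓp f).summable (by simp)

end lp

lemma memℓp_one_of_summable_norm {α : Type*} {E : α → Type*} [∀ a, NormedAddCommGroup (E a)]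
    {f : ∀ a, E a} (hf : Summable fun a => ‖f a‖) : Memℓp f 1 :=
  memℓp_gen (by simpa using hf)

section L1Sum

variable {α κ : Type*} {E : α → Type*} [∀ a, NormedAddCommGroup (E a)]
  [∀ a, NormedSpace ℝ (E a)] {ι : α → Type*} [∀ a, Fintype (ι a)] (e : κ ≃ Σ a, ι a)
  (T : ∀ a, E a →ₗ[ℝ] ι a → ℝ)
  (hT : ∀ a x, ∑ i, |T a x i| ≤ ‖x‖)

include hT in
lemma summable_sum_abs_apply (f : lp E 1) : Summable fun a => ∑ i, |T a (f a) i| :=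
  (lp.summable_norm f).of_nonneg_of_le (fun _ => sum_nonneg fun _ _ => abs_nonneg _)
    fun a => hT a (f a)

include hT in
lemma hasSum_abs_sigma (f : lp E 1) :
    HasSum (fun j : Σ a, ι a => |T j.1 (f j.1) j.2|) (∑' a, ∑ i, |T a (f a) i|) := by
  have hs : Summable fun j : Σ a, ι a => |T j.1 (f j.1) j.2| :=
    (summable_sigma_of_nonneg fun _ => abs_nonneg _).2 ⟨fun a => (hasSum_fintype _).summable,
      by simpa only [tsum_fintype] using summable_sum_abs_apply T hT f⟩
  simpa only [hs.tsum_sigma' fun a => (hasSum_fintype _).summable, tsum_fintype] using hs.hasSum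

noncomputable def l1SumLinearMap : lp E 1 →ₗ[ℝ] lp (fun _ : κ => ℝ) 1 where
  toFun f := ⟨fun k => T (e k).1 (f (e k).1) (e k).2, memℓp_one_of_summable_norm <| by
    simp only [Real.norm_eq_abs]
    exact (hasSum_abs_sigma T hT f).summable.comp_injective e.injective⟩
  map_add' f g := lp.ext <| funext fun k => by simp; rfl
  map_smul' c f := lp.ext <| funext fun k => by simp

lemma norm_l1SumLinearMap (f : lp E 1) :
    ‖l1SumLinearMap e T hT f‖ = ∑' a, ∑ i, |T a (f a) i| := by
  rw [lp.norm_eq_tsum_norm, ← (hasSum_abs_sigma T hT f).tsum_eq,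
    ← e.tsum_eq fun j => |T j.1 (f j.1) j.2|]
  rfl

noncomputable def l1SumMap : lp E 1 →L[ℝ] lp (fun _ : κ => ℝ) 1 :=
  (l1SumLinearMap e T hT).mkContinuous 1 fun f => by
    rw [one_mul, norm_l1SumLinearMap, lp.norm_eq_tsum_norm]
    exact (summable_sum_abs_apply T hT f).tsum_le_tsum (hT · _) (lp.summable_norm f)

lemma antilipschitz_l1SumMap {C : ℝ≥0} (hC : ∀ a x, ‖x‖ ≤ C * ∑ i, |T a x i|) :
    AntilipschitzWith C (l1SumMap e T hT) :=
  (l1SumMap e T hT).antilipschitz_of_bound fun f => by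
    rw [l1SumMap, LinearMap.mkContinuous_apply, norm_l1SumLinearMap, lp.norm_eq_tsum_norm,
      ← tsum_mul_left]
    exact (lp.summable_norm f).tsum_le_tsum (hC · _)
      ((summable_sum_abs_apply T hT f).mul_left (C : ℝ))

end L1Sum

noncomputable def rademacherCoords (n : ℕ) :
    EuclideanSpace ℝ (Fin n) →ₗ[ℝ] (Fin n → Bool) → ℝ where
  toFun x ε := (2 ^ n)⁻¹ * rademacherSum ε x.ofLp
  map_add' x y := funext fun ε => by simp [rademacherSum, mul_add, sum_add_distrib]
  map_smul' c x := funext fun ε => by simp [rademacherSum, mul_sum, mul_left_comm]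

lemma sum_abs_rademacherCoords (n : ℕ) (x : EuclideanSpace ℝ (Fin n)) :
    ∑ ε, |rademacherCoords n x ε| = (2 ^ n)⁻¹ * ∑ ε, |rademacherSum ε x.ofLp| := by
  simp [rademacherCoords, abs_mul, mul_sum]

lemma sum_abs_rademacherCoords_le (n : ℕ) (x : EuclideanSpace ℝ (Fin n)) :
    ∑ ε, |rademacherCoords n x ε| ≤ ‖x‖ := by
  rw [sum_abs_rademacherCoords, inv_mul_le_iff₀ (by positivity)]
  exact sum_abs_rademacherSum_le x

lemma le_sqrt_three_mul_sum_abs_rademacherCoords (n : ℕ) (x : EuclideanSpace ℝ (Fin n)) :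
    ‖x‖ ≤ NNReal.sqrt 3 * ∑ ε, |rademacherCoords n x ε| := by
  rw [sum_abs_rademacherCoords, Real.coe_sqrt, NNReal.coe_ofNat, mul_left_comm,
    le_inv_mul_iff₀ (by positivity)]
  exact le_sqrt_three_mul_sum_abs_rademacherSum x

/-- `ℓ₁` contains a closed subspace isomorphic to the `ℓ₁`-direct sum
`(⊕_{n∈ℕ} ℓ₂ⁿ)_{ℓ₁}`. -/
theorem l1_contains_l1_sum_of_euclidean :
    ∃ S : Submodule ℝ (lp (fun _ : ℕ => ℝ) 1),
      IsClosed (S : Set (lp (fun _ : ℕ => ℝ) 1)) ∧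
      Nonempty (↥(lp (fun n => EuclideanSpace ℝ (Fin n)) 1) ≃L[ℝ] ↥S) := by
  obtain ⟨e⟩ : Nonempty (ℕ ≃ Σ n, (Fin n → Bool)) := nonempty_equiv_of_countable
  set T := l1SumMap e rademacherCoords sum_abs_rademacherCoords_le
  have hT : AntilipschitzWith (NNReal.sqrt 3) T :=
    antilipschitz_l1SumMap e _ _ le_sqrt_three_mul_sum_abs_rademacherCoords
  have hclosed : IsClosed (Set.range T) := hT.isClosed_range T.uniformContinuous
  exact ⟨_, hclosed, ⟨T.equivRange hT.injective hclosed⟩⟩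
end
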